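/- Let p ∈ (0,1) and let θ' be a non-atomic Borel probability measure on [0,∞) such that 0 is not in the support of θ' (i.e., θ'([0,ε₀]) = 0 for some ε₀ > 0). Then θ = p·δ₀ + (1−p)·θ' is not feasible: there is no complete separable metric space (S,d) with Borel probability measure μ whose distance distribution equals θ. -/

import Mathlib

/-!
Let `μ` realize `θ`. Since `θ` gives no mass to `(0, ε₀]`, for almost every `x` the punctured
ball of radius `ε₀` around `x` is `μ`-null; as almost every `x` lies in the support of `μ`, its
ball has positive mass, so almost every `x` is an atom of `μ`. Two distinct atoms `x, y` would
make `dist x y > 0` an atom of `θ`, which `θ` does not have. Hence `μ` is a Dirac mass, so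
`θ = δ₀`, contradicting `θ {0} = p < 1`.
-/

open MeasureTheory Measure Set

lemma MeasureTheory.Measure.eq_dirac_of_ae_eq {α : Type*} [MeasurableSpace α]
    [MeasurableSingletonClass α] {μ : Measure α} [IsProbabilityMeasure μ] {x₀ : α}
    (h : ∀ᵐ x ∂μ, x = x₀) : μ = dirac x₀ := by
  have hμ : μ = μ {x₀} • dirac x₀ := by
    simpa using (ae_mem_finset_iff (s := {x₀})).1 (by simpa using h)
  rwa [(prob_compl_eq_zero_iff (measurableSet_singleton x₀)).1 (ae_iff.1 h), one_smul] at hμ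

variable {S : Type*} [MeasurableSpace S]

section PseudoMetric

variable [PseudoMetricSpace S]

noncomputable def distanceDistribution (μ : Measure S) : Measure ℝ :=
  (μ.prod μ).map fun q : S × S ↦ dist q.1 q.2

variable [SecondCountableTopology S] [OpensMeasurableSpace S]

lemma distanceDistribution_apply (μ : Measure S) {E : Set ℝ} (hE : MeasurableSet E) :
    distanceDistribution μ E = (μ.prod μ) {q | dist q.1 q.2 ∈ E} :=
  map_apply continuous_dist.measurable hE

lemma distanceDistribution_dirac (x : S) : distanceDistribution (dirac x) = dirac 0 := by
  rw [distanceDistribution, dirac_prod_dirac, map_dirac' continuous_dist.measurable, dist_self]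

end PseudoMetric

section Metric

variable [MetricSpace S] [SecondCountableTopology S] [OpensMeasurableSpace S] {μ : Measure S}
  [SFinite μ]

lemma ae_measure_singleton_ne_zero_of_distanceDistribution_Ioc_eq_zero {ε : ℝ} (hε : 0 < ε)
    (h : distanceDistribution μ (Ioc 0 ε) = 0) : ∀ᵐ x ∂μ, μ {x} ≠ 0 := by
  have hfar : ∀ᵐ x ∂μ, ∀ᵐ y ∂μ, dist x y ∉ Ioc 0 ε := by
    rw [distanceDistribution_apply μ measurableSet_Ioc] at h
    exact ae_ae_of_ae_prod (measure_eq_zero_iff_ae_notMem.1 h)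
  filter_upwards [hfar, support_mem_ae (μ := μ)] with x hx hsupp hatom
  have hball : μ (Metric.ball x ε) = 0 := by
    refine measure_eq_zero_iff_ae_notMem.2 ?_
    filter_upwards [hx, measure_eq_zero_iff_ae_notMem.1 hatom] with y hxy hyx hy
    exact hxy ⟨dist_pos.2 (Ne.symm hyx), (Metric.mem_ball'.1 hy).le⟩
  exact ((mem_support_iff_forall x).1 hsupp _ (Metric.ball_mem_nhds x hε)).ne' hball

lemma eq_of_measure_singleton_ne_zero (h : ∀ t ≠ 0, distanceDistribution μ {t} = 0) {x y : S}
    (hx : μ {x} ≠ 0) (hy : μ {y} ≠ 0) : x = y := by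
  by_contra hxy
  have hle : μ {x} * μ {y} ≤ distanceDistribution μ {dist x y} := by
    rw [← prod_prod, distanceDistribution_apply μ (measurableSet_singleton _)]
    exact measure_mono fun q ⟨hq₁, hq₂⟩ ↦ by simp_all
  rw [h _ (dist_ne_zero.2 hxy)] at hle
  exact mul_ne_zero hx hy (nonpos_iff_eq_zero.1 hle)

lemma exists_eq_dirac_of_distanceDistribution [IsProbabilityMeasure μ] {ε : ℝ} (hε : 0 < ε)
    (hIoc : distanceDistribution μ (Ioc 0 ε) = 0)
    (hatoms : ∀ t ≠ 0, distanceDistribution μ {t} = 0) : ∃ x₀, μ = dirac x₀ := by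
  have hae := ae_measure_singleton_ne_zero_of_distanceDistribution_Ioc_eq_zero hε hIoc
  obtain ⟨x₀, hx₀⟩ := hae.exists
  refine ⟨x₀, eq_dirac_of_ae_eq ?_⟩
  filter_upwards [hae] with x hx using eq_of_measure_singleton_ne_zero hatoms hx hx₀

end Metric

theorem atom_at_zero_plus_nonatomic_away_from_zero_not_feasible.{u}
    (p : ℝ) (hp : p ∈ Set.Ioo (0 : ℝ) 1)
    (θ' : Measure ℝ) [IsProbabilityMeasure θ']
    (hθ'_nonneg : θ' (Set.Iio 0) = 0)
    (hθ'_nonatomic : ∀ x : ℝ, θ' {x} = 0)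
    (ε₀ : ℝ) (hε₀ : 0 < ε₀) (hθ'_supp : θ' (Set.Icc 0 ε₀) = 0) :
    ¬ ∃ (S : Type u) (_ : MetricSpace S) (_ : MeasurableSpace S) (_ : BorelSpace S)
        (μ : Measure S) (_ : IsProbabilityMeasure μ),
        CompleteSpace S ∧ TopologicalSpace.SeparableSpace S ∧
        (μ.prod μ).map (fun q : S × S => dist q.1 q.2)
          = ENNReal.ofReal p • Measure.dirac (0 : ℝ) + ENNReal.ofReal (1 - p) • θ' := by
  rintro ⟨S, _, _, _, μ, _, -, _, hθ : distanceDistribution μ = _⟩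
  have : SecondCountableTopology S := UniformSpace.secondCountable_of_separable S
  have hIoc : distanceDistribution μ (Ioc 0 ε₀) = 0 := by
    simp [hθ, measure_mono_null Ioc_subset_Icc_self hθ'_supp]
  have hatoms : ∀ t ≠ 0, distanceDistribution μ {t} = 0 := fun t ht ↦ by
    simp [hθ, hθ'_nonatomic, ht]
  obtain ⟨x₀, rfl⟩ := exists_eq_dirac_of_distanceDistribution hε₀ hIoc hatoms
  have h0 := congrArg (· {(0 : ℝ)}) hθ
  simp [distanceDistribution_dirac, hθ'_nonatomic] at h0
  exact hp.2.ne (ENNReal.ofReal_eq_one.1 h0.symm)
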